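/- arXiv:1805.07365 — 2 statements merged into one kernel-verified Lean document; each statement's English description precedes it below -/
import Mathlib

section
/- Let $F$ be a Borel equivalence relation on a standard Borel space $X$ all of whose classes are finite. Then there is a Borel set $B \subseteq X$ meeting every $F$-class in exactly one point (a Borel transversal), and a Borel automorphism $T$ of $X$ that induces $F$ (i.e., the orbits of $T$ are exactly the $F$-classes). -/
/-!
Order `X` through a Borel embedding into `ℝ`. The least points of the classes form the
transversal, and the automorphism sends each point to the next larger point of its class and the
largest point back to the least one, so that every class is a single cycle. Both maps have graphs
described by "no classmate lies in between", that is, by projections of Borel sets `A` with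
finite sections `A_z`, and such projections are Borel: Novikov's separation theorem covers the
analytic sets `{z | n ≤ #A_z}`, which have empty intersection, by Borel sets with empty
intersection; on a Borel piece where `#A_z` is bounded, the level sets `{z | #A_z = n}` are
peeled off from the top as injective images of the increasing enumerations of the sections
(Lusin–Souslin).
-/

open Set Function

section MeasurablySeparableSeq

variable {α : Type*} [MeasurableSpace α]

def MeasurablySeparableSeq (A : ℕ → Set α) : Prop :=
  ∃ B : ℕ → Set α, (∀ n, A n ⊆ B n) ∧ (∀ n, MeasurableSet (B n)) ∧ ⋂ n, B n = ∅

theorem MeasurablySeparableSeq.mono {A A' : ℕ → Set α} (h : MeasurablySeparableSeq A')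
    (hA : ∀ n, A n ⊆ A' n) : MeasurablySeparableSeq A :=
  let ⟨B, hA'B, hB, hB₀⟩ := h
  ⟨B, fun n => (hA n).trans (hA'B n), hB, hB₀⟩

theorem measurablySeparableSeq_of_subset_of_subset {A : ℕ → Set α} {i j : ℕ} {U V : Set α}
    (hAU : A i ⊆ U) (hAV : A j ⊆ V) (hU : MeasurableSet U) (hV : MeasurableSet V)
    (hUV : Disjoint U V) : MeasurablySeparableSeq A := by
  refine ⟨fun n => (if n = i then U else univ) ∩ (if n = j then V else univ), fun n => ?_,
    fun n => ?_, ?_⟩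
  · refine subset_inter ?_ ?_
    · split_ifs with h
      exacts [h ▸ hAU, subset_univ _]
    · split_ifs with h
      exacts [h ▸ hAV, subset_univ _]
  · refine MeasurableSet.inter ?_ ?_ <;> split_ifs <;> first | exact .univ | assumption
  · refine eq_empty_of_subset_empty fun x hx => hUV.le_bot ⟨?_, ?_⟩
    · simpa using (mem_iInter.1 hx i).1
    · simpa using (mem_iInter.1 hx j).2

theorem MeasurablySeparableSeq.update_iUnion {ι : Type*} [Countable ι] {A : ℕ → Set α}
    {k : ℕ} {T : ι → Set α} (h : ∀ i, MeasurablySeparableSeq (update A k (T i))) :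
    MeasurablySeparableSeq (update A k (⋃ i, T i)) := by
  choose B hAB hB hB₀ using h
  refine ⟨update (fun n => ⋂ i, B i n) k (⋃ i, B i k), fun n => ?_, fun n => ?_, ?_⟩
  · rcases eq_or_ne n k with rfl | hn
    · simpa using iUnion_mono fun i => by simpa using hAB i n
    · simpa [hn] using fun i => by simpa [hn] using hAB i n
  · rcases eq_or_ne n k with rfl | hn
    · simpa using MeasurableSet.iUnion fun i => hB i n
    · simpa [hn] using MeasurableSet.iInter fun i => hB i n
  · refine eq_empty_of_subset_empty fun x hx => ?_
    obtain ⟨i, hi⟩ := mem_iUnion.1 (by simpa using mem_iInter.1 hx k)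
    rw [← hB₀ i]
    refine mem_iInter.2 fun n => ?_
    rcases eq_or_ne n k with rfl | hn
    · exact hi
    · exact mem_iInter.1 (by simpa [hn] using mem_iInter.1 hx n) i

end MeasurablySeparableSeq

section BaireSpace

open PiNat

variable {E β : Type*}

theorem image_cylinder_update_succ {g : (ℕ → E) → β} {N : ℕ}
    (hg : ∀ z a, g (update z N a) = g z) (y : ℕ → E) (a : E) :
    g '' cylinder (update y N a) (N + 1) = g '' cylinder y N := by
  refine (image_mono fun z hz => ?_).antisymm ?_
  · exact mem_cylinder_iff_eq.1 (update_mem_cylinder y N a) ▸ cylinder_anti _ N.le_succ hz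
  · rintro _ ⟨z, hz, rfl⟩
    refine ⟨update z N a, mem_cylinder_iff.2 fun i hi => ?_, hg z a⟩
    rcases (Nat.lt_succ_iff_lt_or_eq.1 hi) with hi | rfl
    · simpa [hi.ne] using mem_cylinder_iff.1 hz i hi
    · simp

theorem exists_forall_mem_cylinder {ys : ℕ → ℕ → E}
    (h : ∀ N, ys (N + 1) ∈ cylinder (ys N) N) : ∃ y, ∀ N, y ∈ cylinder (ys N) N := by
  have hstab : ∀ k N, k < N → ys N k = ys (k + 1) k := by
    intro k N hkN
    induction N, hkN using Nat.le_induction with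
    | base => rfl
    | succ N _ ih => rw [← ih]; exact mem_cylinder_iff.1 (h N) k (by omega)
  exact ⟨fun k => ys (k + 1) k, fun N => mem_cylinder_iff.2 fun k hk => (hstab k N hk).symm⟩

theorem exists_forall_of_forall_exists_update {P : (ℕ → E) → ℕ → Prop}
    (hP : ∀ y z N, z ∈ cylinder y N → P y N → P z N) {y₀ : ℕ → E} (h₀ : P y₀ 0)
    (hstep : ∀ y N, P y N → ∃ a, P (update y N a) (N + 1)) : ∃ y, ∀ N, P y N := by
  have : ∀ y N, ∃ a, P y N → P (update y N a) (N + 1) := fun y N => by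
    by_cases h : P y N
    · exact (hstep y N h).imp fun _ ha _ => ha
    · exact ⟨y₀ N, fun h' => absurd h' h⟩
  choose c hc using this
  let ys : ℕ → ℕ → E := fun N => Nat.rec y₀ (fun N y => update y N (c y N)) N
  have hys : ∀ N, P (ys N) N := fun N => by
    induction N with
    | zero => exact h₀
    | succ N ih => exact hc _ _ ih
  obtain ⟨y, hy⟩ := exists_forall_mem_cylinder (ys := ys) fun N => update_mem_cylinder _ _ _
  exact ⟨y, fun N => hP _ _ _ (hy N) (hys N)⟩

variable [TopologicalSpace E] [DiscreteTopology E]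

theorem exists_cylinder_subset {U : Set (ℕ → E)} (hU : IsOpen U) {y : ℕ → E}
    (hy : y ∈ U) : ∃ N, cylinder y N ⊆ U := by
  obtain ⟨_, ⟨x, N, rfl⟩, hyx, hxU⟩ :=
    (isTopologicalBasis_cylinders fun _ => E).exists_subset_of_mem_open hy hU
  exact ⟨N, mem_cylinder_iff_eq.1 hyx ▸ hxU⟩

end BaireSpace

section NovikovSeparation

open PiNat

variable {α : Type*} [TopologicalSpace α] [T2Space α] [MeasurableSpace α]
  [OpensMeasurableSpace α]

theorem measurablySeparableSeq_range {f : ℕ → (ℕ → ℕ) → α}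
    (hf : ∀ n, Continuous (f n)) (h : ⋂ n, range (f n) = ∅) :
    MeasurablySeparableSeq fun n => range (f n) := by
  -- `g n` reads the argument of `f n` off the coordinates `Nat.pair n j`, so the `N`-th
  -- coordinate only matters to `g N.unpair.1`: refining the cylinders one coordinate at a time
  -- changes one member of the family at a time.
  set g : ℕ → (ℕ → ℕ) → α := fun n y => f n fun j => y (Nat.pair n j) with hg_def
  have hg : ∀ n, Continuous (g n) := fun n =>
    (hf n).comp (continuous_pi fun j => continuous_apply _)
  have hg_update : ∀ n N z a, n ≠ N.unpair.1 → g n (update z N a) = g n z := by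
    intro n N z a hn
    simp only [hg_def]
    congr 1
    funext j
    refine update_of_ne (fun hj => hn ?_) _ _
    rw [← hj, Nat.unpair_pair]
  by_contra hsep
  set P : (ℕ → ℕ) → ℕ → Prop := fun y N =>
    ¬MeasurablySeparableSeq fun n => g n '' cylinder y N
  have hP : ∀ y z N, z ∈ cylinder y N → P y N → P z N := by
    intro y z N hz
    simp only [P, mem_cylinder_iff_eq.1 hz]
    exact id
  have h₀ : P 0 0 := by
    refine fun hsep' => hsep (hsep'.mono fun n => ?_)
    rintro _ ⟨w, rfl⟩
    exact ⟨fun p => w p.unpair.2, by simp [cylinder_zero, hg_def]⟩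
  have hstep : ∀ y N, P y N → ∃ a, P (update y N a) (N + 1) := by
    intro y N
    contrapose!
    intro H
    simp only [P, not_not] at H ⊢
    have hupd : ∀ a, (fun n => g n '' cylinder (update y N a) (N + 1)) =
        update (fun n => g n '' cylinder y N) N.unpair.1
          (g N.unpair.1 '' cylinder (update y N a) (N + 1)) := by
      intro a
      funext n
      rcases eq_or_ne n N.unpair.1 with rfl | hn
      · simp
      · simpa [hn] using image_cylinder_update_succ (fun z a => hg_update n N z a hn) y a
    have := MeasurablySeparableSeq.update_iUnion fun a => hupd a ▸ H a
    rwa [← image_iUnion, iUnion_cylinder_update y N, update_eq_self] at this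
  obtain ⟨y, hy⟩ := exists_forall_of_forall_exists_update hP h₀ hstep
  obtain ⟨n₀, n₁, hne⟩ : ∃ n₀ n₁, g n₀ y ≠ g n₁ y := by
    by_contra! hall
    exact (h ▸ mem_iInter.2 fun n => ⟨_, hall n 0⟩ : g 0 y ∈ (∅ : Set α))
  obtain ⟨U, V, hU, hV, hyU, hyV, hUV⟩ := t2_separation hne
  obtain ⟨N₀, hN₀⟩ := exists_cylinder_subset (hU.preimage (hg n₀)) hyU
  obtain ⟨N₁, hN₁⟩ := exists_cylinder_subset (hV.preimage (hg n₁)) hyV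
  exact hy (max N₀ N₁) <| measurablySeparableSeq_of_subset_of_subset
    (image_subset_iff.2 ((cylinder_anti _ (le_max_left _ _)).trans hN₀))
    (image_subset_iff.2 ((cylinder_anti _ (le_max_right _ _)).trans hN₁))
    hU.measurableSet hV.measurableSet hUV

theorem MeasureTheory.AnalyticSet.measurablySeparableSeq {A : ℕ → Set α}
    (hA : ∀ n, MeasureTheory.AnalyticSet (A n)) (h : ⋂ n, A n = ∅) :
    MeasurablySeparableSeq A := by
  by_cases hempty : ∃ n, A n = ∅
  · obtain ⟨n, hn⟩ := hempty
    exact measurablySeparableSeq_of_subset_of_subset hn.subset hn.subset .empty .empty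
      (disjoint_empty _)
  rw [not_exists] at hempty
  have : ∀ n, ∃ f : (ℕ → ℕ) → α, Continuous f ∧ range f = A n := fun n => by
    have hAn := hA n
    rw [MeasureTheory.AnalyticSet] at hAn
    exact hAn.resolve_left (hempty n)
  choose f hf hfA using this
  simpa [hfA] using measurablySeparableSeq_range hf (by simpa [hfA] using h)

end NovikovSeparation

theorem Function.Injective.encard_range_eq {α β : Type*} {f : α → β} (hf : Injective f) :
    (range f).encard = ENat.card α := by
  rw [← image_univ, hf.encard_image, encard_univ]

section FiniteSections

variable {Z Y : Type*} [LinearOrder Y]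

def increasingSectionTuples (A : Set (Z × Y)) (n : ℕ) : Set (Z × (Fin n → Y)) :=
  {p | StrictMono p.2 ∧ ∀ i, (p.1, p.2 i) ∈ A}

theorem fst_image_increasingSectionTuples (A : Set (Z × Y)) (n : ℕ) :
    Prod.fst '' increasingSectionTuples A n =
      {z | (n : ℕ∞) ≤ (Prod.mk z ⁻¹' A).encard} := by
  ext z
  constructor
  · rintro ⟨⟨z, v⟩, ⟨hv, hvA⟩, rfl⟩
    have hvA' : range v ⊆ Prod.mk z ⁻¹' A := range_subset_iff.2 hvA
    simpa [hv.injective.encard_range_eq] using encard_le_encard hvA'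
  · intro hn
    obtain ⟨t, htA, htn⟩ := exists_subset_encard_eq hn
    have htfin : t.Finite := finite_of_encard_eq_coe htn
    have hcard : htfin.toFinset.card = n := by
      rw [← ENat.natCast_inj, ← htfin.encard_eq_coe_toFinset_card, htn]
    refine ⟨(z, htfin.toFinset.orderEmbOfFin hcard),
      ⟨OrderEmbedding.strictMono _, fun i => ?_⟩, rfl⟩
    exact htA (htfin.mem_toFinset.1 (Finset.orderEmbOfFin_mem _ hcard i))

theorem injOn_fst_increasingSectionTuples (A : Set (Z × Y)) (n : ℕ) :
    InjOn Prod.fst (increasingSectionTuples A n ∩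
      Prod.fst ⁻¹' {z | (Prod.mk z ⁻¹' A).encard ≤ n}) := by
  have hrange : ∀ {z} (v : Fin n → Y), StrictMono v → range v ⊆ Prod.mk z ⁻¹' A →
      (Prod.mk z ⁻¹' A).encard ≤ n → range v = Prod.mk z ⁻¹' A := fun v hv hvA hA =>
    (toFinite _).eq_of_subset_of_encard_le hvA (by simpa [hv.injective.encard_range_eq] using hA)
  rintro ⟨z, v⟩ ⟨⟨hv, hvA⟩, hz⟩ ⟨z', w⟩ ⟨⟨hw, hwA⟩, -⟩ (rfl : z = z')
  simp only [Prod.mk.injEq, true_and]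
  exact (hv.range_inj hw).1 <|
    (hrange v hv (range_subset_iff.2 hvA) hz).trans (hrange w hw (range_subset_iff.2 hwA) hz).symm

variable [MeasurableSpace Z] [MeasurableSpace Y]

theorem measurableSet_increasingSectionTuples {A : Set (Z × Y)} (hA : MeasurableSet A)
    (hlt : MeasurableSet {q : Y × Y | q.1 < q.2}) (n : ℕ) :
    MeasurableSet (increasingSectionTuples A n) := by
  have hmono : {p : Z × (Fin n → Y) | StrictMono p.2} =
      ⋂ (i) (j) (_ : i < j),
        (fun p : Z × (Fin n → Y) => (p.2 i, p.2 j)) ⁻¹' {q | q.1 < q.2} := by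
    ext p
    simp [StrictMono]
  have hsec : {p : Z × (Fin n → Y) | ∀ i, (p.1, p.2 i) ∈ A} =
      ⋂ i, (fun p : Z × (Fin n → Y) => (p.1, p.2 i)) ⁻¹' A := by
    ext p
    simp
  rw [increasingSectionTuples, ofPred_and, hmono, hsec]
  refine .inter (.iInter fun i => .iInter fun j => .iInter fun _ => ?_) (.iInter fun i => ?_)
  · exact (((measurable_pi_apply i).comp measurable_snd).prodMk
      ((measurable_pi_apply j).comp measurable_snd)) hlt
  · exact (measurable_fst.prodMk ((measurable_pi_apply i).comp measurable_snd)) hA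

variable [StandardBorelSpace Z] [StandardBorelSpace Y]

theorem measurableSet_le_encard_of_lt {A : Set (Z × Y)} (hA : MeasurableSet A)
    (hlt : MeasurableSet {q : Y × Y | q.1 < q.2}) {n : ℕ}
    (h : MeasurableSet {z | (n : ℕ∞) < (Prod.mk z ⁻¹' A).encard}) :
    MeasurableSet {z | (n : ℕ∞) ≤ (Prod.mk z ⁻¹' A).encard} := by
  have hcompl : {z | (n : ℕ∞) < (Prod.mk z ⁻¹' A).encard}ᶜ =
      {z | (Prod.mk z ⁻¹' A).encard ≤ n} := by
    ext z
    simp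
  have hexact : MeasurableSet (Prod.fst '' (increasingSectionTuples A n ∩
      Prod.fst ⁻¹' {z | (Prod.mk z ⁻¹' A).encard ≤ n})) :=
    ((measurableSet_increasingSectionTuples hA hlt n).inter
      (measurable_fst (hcompl ▸ h.compl))).image_of_measurable_injOn measurable_fst
      (injOn_fst_increasingSectionTuples A n)
  rw [image_inter_preimage, fst_image_increasingSectionTuples] at hexact
  convert h.union hexact using 1
  ext z
  simp only [mem_union, mem_inter_iff, mem_ofPred_eq]
  exact ⟨fun hz => (lt_or_ge _ _).imp_right fun h' => ⟨hz, h'⟩,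
    fun hz => hz.elim (fun h' : (n : ℕ∞) < _ => h'.le) And.left⟩

theorem MeasurableSet.fst_image_of_encard_le {A : Set (Z × Y)} (hA : MeasurableSet A)
    (hlt : MeasurableSet {q : Y × Y | q.1 < q.2}) {N : ℕ}
    (hN : ∀ z, (Prod.mk z ⁻¹' A).encard ≤ N) : MeasurableSet (Prod.fst '' A) := by
  have hle : ∀ k ≤ N + 1, MeasurableSet {z | (k : ℕ∞) ≤ (Prod.mk z ⁻¹' A).encard} := by
    refine fun k hk => Nat.decreasingInduction (motive := fun k _ => MeasurableSet
      {z | (k : ℕ∞) ≤ (Prod.mk z ⁻¹' A).encard}) (fun k _ ih => ?_) ?_ hk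
    · exact measurableSet_le_encard_of_lt hA hlt (by simpa [ENat.add_one_le_iff] using ih)
    · convert MeasurableSet.empty
      refine eq_empty_of_forall_notMem fun z hz => (hN z).not_gt ?_
      simpa [ENat.add_one_le_iff] using hz
  convert hle 1 (by omega)
  ext z
  simp [Set.Nonempty]

theorem exists_measurableSet_cover_encard_le {A : Set (Z × Y)} (hA : MeasurableSet A)
    (hlt : MeasurableSet {q : Y × Y | q.1 < q.2}) (hfin : ∀ z, (Prod.mk z ⁻¹' A).Finite) :
    ∃ P : ℕ → Set Z, (∀ n, MeasurableSet (P n)) ∧ ⋃ n, P n = univ ∧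
      ∀ n, ∀ z ∈ P n, (Prod.mk z ⁻¹' A).encard ≤ n := by
  let := upgradeStandardBorel Z
  have hC : ∀ n : ℕ,
      MeasureTheory.AnalyticSet {z | (n : ℕ∞) ≤ (Prod.mk z ⁻¹' A).encard} := fun n =>
    fst_image_increasingSectionTuples A n ▸
      (measurableSet_increasingSectionTuples hA hlt n).analyticSet_image measurable_fst
  have hC₀ : ⋂ n : ℕ, {z | (n : ℕ∞) ≤ (Prod.mk z ⁻¹' A).encard} = ∅ := by
    refine eq_empty_of_forall_notMem fun z hz => ?_
    have hcard := mem_iInter.1 hz ((hfin z).toFinset.card + 1)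
    rw [mem_ofPred_eq, (hfin z).encard_eq_coe_toFinset_card, Nat.cast_le] at hcard
    omega
  obtain ⟨B, hCB, hB, hB₀⟩ := MeasureTheory.AnalyticSet.measurablySeparableSeq hC hC₀
  refine ⟨fun n => (B n)ᶜ, fun n => (hB n).compl, ?_, fun n z hz => ?_⟩
  · rw [← compl_iInter, hB₀, compl_empty]
  · exact (not_le.1 fun h => hz (hCB n h)).le

theorem MeasurableSet.fst_image_of_finite_sections {A : Set (Z × Y)} (hA : MeasurableSet A)
    (hlt : MeasurableSet {q : Y × Y | q.1 < q.2}) (hfin : ∀ z, (Prod.mk z ⁻¹' A).Finite) :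
    MeasurableSet (Prod.fst '' A) := by
  obtain ⟨P, hP, hcover, hPA⟩ := exists_measurableSet_cover_encard_le hA hlt hfin
  rw [← inter_univ (Prod.fst '' A), ← hcover, inter_iUnion]
  simp_rw [← image_inter_preimage]
  refine .iUnion fun n =>
    (hA.inter (measurable_fst (hP n))).fst_image_of_encard_le hlt (N := n) fun z => ?_
  by_cases hz : z ∈ P n
  · exact (encard_le_encard fun y hy => hy.1).trans (hPA n z hz)
  · have hempty : Prod.mk z ⁻¹' (A ∩ Prod.fst ⁻¹' P n) = ∅ :=
      eq_empty_of_forall_notMem fun y hy => hz hy.2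
    simp [hempty]

end FiniteSections

theorem Set.Finite.exists_isLeast {α : Type*} [LinearOrder α] {s : Set α} (hs : s.Finite)
    (hne : s.Nonempty) : ∃ a, IsLeast s a :=
  ⟨_, hs.coe_toFinset ▸ hs.toFinset.isLeast_min' (hs.toFinset_nonempty.2 hne)⟩

theorem Set.Finite.exists_isGreatest {α : Type*} [LinearOrder α] {s : Set α} (hs : s.Finite)
    (hne : s.Nonempty) : ∃ a, IsGreatest s a :=
  ⟨_, hs.coe_toFinset ▸ hs.toFinset.isGreatest_max' (hs.toFinset_nonempty.2 hne)⟩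

theorem Equivalence.setOf_rel_eq {α : Type*} {r : α → α → Prop} (hr : Equivalence r)
    {x y : α} (h : r x y) : {z | r x z} = {z | r y z} :=
  ext fun _ => ⟨hr.trans (hr.symm h), hr.trans h⟩

section CyclicSuccessor

variable {X : Type*} [LinearOrder X] {F : X → X → Prop}

noncomputable def classMin (F : X → X → Prop) (x : X) : X :=
  @Classical.epsilon X ⟨x⟩ (IsLeast {y | F x y})

open Classical in
noncomputable def classSucc (F : X → X → Prop) (x : X) : X :=
  if ∃ y, F x y ∧ x < y then @Classical.epsilon X ⟨x⟩ (IsLeast {y | F x y ∧ x < y})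
  else classMin F x

theorem isLeast_classMin (hF : Equivalence F) (hfin : ∀ x, {y | F x y}.Finite) (x : X) :
    IsLeast {y | F x y} (classMin F x) :=
  Classical.epsilon_spec ((hfin x).exists_isLeast ⟨x, hF.refl x⟩)

theorem isLeast_classSucc (hfin : ∀ x, {y | F x y}.Finite) {x : X} (h : ∃ y, F x y ∧ x < y) :
    IsLeast {y | F x y ∧ x < y} (classSucc F x) := by
  rw [classSucc, if_pos h]
  exact Classical.epsilon_spec (((hfin x).subset fun _ hy => hy.1).exists_isLeast h)

theorem classSucc_of_not_exists {x : X} (h : ¬∃ y, F x y ∧ x < y) :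
    classSucc F x = classMin F x :=
  if_neg h

theorem classSucc_eq_iff (hF : Equivalence F) (hfin : ∀ x, {y | F x y}.Finite) {x y : X} :
    classSucc F x = y ↔
      IsLeast {y | F x y ∧ x < y} y ∨
        (¬(∃ z, F x z ∧ x < z) ∧ IsLeast {y | F x y} y) := by
  by_cases h : ∃ z, F x z ∧ x < z
  · simpa [h] using
      ⟨fun hy => hy ▸ isLeast_classSucc hfin h, (isLeast_classSucc hfin h).unique⟩
  · have hnot : ¬IsLeast {y | F x y ∧ x < y} y := fun hy => h ⟨y, hy.1⟩
    simpa [h, hnot, classSucc_of_not_exists h] using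
      ⟨fun hy => hy ▸ isLeast_classMin hF hfin x, (isLeast_classMin hF hfin x).unique⟩

theorem rel_classSucc (hF : Equivalence F) (hfin : ∀ x, {y | F x y}.Finite) (x : X) :
    F x (classSucc F x) := by
  by_cases h : ∃ y, F x y ∧ x < y
  · exact (isLeast_classSucc hfin h).1.1
  · exact classSucc_of_not_exists h ▸ (isLeast_classMin hF hfin x).1

theorem exists_iterate_classSucc_eq_classMin (hF : Equivalence F)
    (hfin : ∀ x, {y | F x y}.Finite) (x : X) : ∃ n, (classSucc F)^[n] x = classMin F x := by
  refine ((hfin x).wellFoundedOn (r := (· > ·))).induction (hF.refl x)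
    (P := fun z => ∃ n, (classSucc F)^[n] z = classMin F x) fun z hz ih => ?_
  by_cases h : ∃ y, F z y ∧ z < y
  · have hsucc := (isLeast_classSucc hfin h).1
    obtain ⟨n, hn⟩ := ih _ (hF.trans hz hsucc.1) hsucc.2
    exact ⟨n + 1, by rwa [iterate_succ_apply]⟩
  · refine ⟨1, ?_⟩
    rw [iterate_one, classSucc_of_not_exists h]
    exact ((isLeast_classMin hF hfin z).unique (hF.setOf_rel_eq hz ▸ isLeast_classMin hF hfin x))

theorem exists_iterate_classMin_eq (hF : Equivalence F) (hfin : ∀ x, {y | F x y}.Finite)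
    {x y : X} (hxy : F x y) : ∃ n, (classSucc F)^[n] (classMin F x) = y := by
  refine ((hfin x).wellFoundedOn (r := (· < ·))).induction hxy
    (P := fun y => ∃ n, (classSucc F)^[n] (classMin F x) = y) fun y hy ih => ?_
  have hmin := isLeast_classMin hF hfin x
  rcases (hmin.2 hy).lt_or_eq with hlt | heq
  · have hbelow : {z | F x z ∧ z < y}.Finite := (hfin x).subset fun _ hz => hz.1
    obtain ⟨p, hp⟩ := hbelow.exists_isGreatest ⟨_, hmin.1, hlt⟩
    have hpy : F p y := hF.trans (hF.symm hp.1.1) hy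
    have hsucc : classSucc F p = y :=
      (isLeast_classSucc hfin ⟨y, hpy, hp.1.2⟩).unique ⟨⟨hpy, hp.1.2⟩,
        fun z hz => not_lt.1 fun hzy => (hp.2 ⟨hF.trans hp.1.1 hz.1, hzy⟩).not_gt hz.2⟩
    obtain ⟨n, hn⟩ := ih p hp.1.1 hp.1.2
    exact ⟨n + 1, by rw [iterate_succ_apply', hn, hsucc]⟩
  · exact ⟨0, heq⟩

theorem rel_iff_exists_iterate_classSucc (hF : Equivalence F) (hfin : ∀ x, {y | F x y}.Finite)
    {x y : X} : F x y ↔ ∃ n, (classSucc F)^[n] x = y := by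
  constructor
  · intro hxy
    obtain ⟨m, hm⟩ := exists_iterate_classSucc_eq_classMin hF hfin x
    obtain ⟨n, hn⟩ := exists_iterate_classMin_eq hF hfin hxy
    exact ⟨n + m, by rw [iterate_add_apply, hm, hn]⟩
  · rintro ⟨n, rfl⟩
    induction n with
    | zero => exact hF.refl x
    | succ n ih =>
      exact hF.trans ih (iterate_succ_apply' (classSucc F) n x ▸ rel_classSucc hF hfin _)

theorem bijective_classSucc (hF : Equivalence F) (hfin : ∀ x, {y | F x y}.Finite) :
    Bijective (classSucc F) := by
  have hper : periodicPts (classSucc F) = univ := eq_univ_of_forall fun x => by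
    obtain ⟨n, hn⟩ :=
      (rel_iff_exists_iterate_classSucc hF hfin).1 (hF.symm (rel_classSucc hF hfin x))
    exact mk_mem_periodicPts n.succ_pos (by rwa [IsPeriodicPt, IsFixedPt, iterate_succ_apply])
  simpa [hper] using bijOn_periodicPts (f := classSucc F)

theorem existsUnique_isLeast_rel (hF : Equivalence F) (hfin : ∀ x, {y | F x y}.Finite) (x : X) :
    ∃! y, IsLeast {z | F y z} y ∧ F x y := by
  have hmin := isLeast_classMin hF hfin x
  refine ⟨classMin F x, ⟨hF.setOf_rel_eq hmin.1 ▸ hmin, hmin.1⟩, fun y hy => ?_⟩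
  exact hy.1.unique (hF.setOf_rel_eq hy.2 ▸ hmin)

end CyclicSuccessor

theorem measurable_of_measurableSet_graph {α β : Type*} [MeasurableSpace α]
    [StandardBorelSpace α] [MeasurableSpace β] [StandardBorelSpace β] {f : α → β}
    (hf : MeasurableSet {p : α × β | f p.1 = p.2}) : Measurable f := by
  intro s hs
  have hpre : f ⁻¹' s = Prod.fst '' ({p : α × β | f p.1 = p.2} ∩ Prod.snd ⁻¹' s) := by
    ext x
    exact ⟨fun hx => ⟨(x, f x), ⟨rfl, hx⟩, rfl⟩,
      fun ⟨p, ⟨(hp : f p.1 = p.2), hs⟩, hpx⟩ => hpx ▸ (hp ▸ hs : f p.1 ∈ s)⟩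
  rw [hpre]
  refine (hf.inter (measurable_snd hs)).image_of_measurable_injOn measurable_fst ?_
  rintro ⟨x, y⟩ ⟨hxy, -⟩ ⟨x', y'⟩ ⟨hxy', -⟩ (rfl : x = x')
  exact Prod.ext rfl (hxy.symm.trans hxy')

theorem Equiv.measurable_symm {α β : Type*} [MeasurableSpace α] [StandardBorelSpace α]
    [MeasurableSpace β] [MeasurableSpace.CountablySeparated β] (T : α ≃ β)
    (hT : Measurable T) : Measurable T.symm := fun s hs => by
  rw [← T.image_eq_preimage_symm]
  exact (hT.measurableEmbedding T.injective).measurableSet_image.2 hs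

section BorelClasses

variable {X : Type*} [LinearOrder X] [MeasurableSpace X] [StandardBorelSpace X]
  {F : X → X → Prop} {Z : Type*} [MeasurableSpace Z] [StandardBorelSpace Z]

theorem measurableSet_exists_rel_and_mem (hlt : MeasurableSet {p : X × X | p.1 < p.2})
    (hFborel : MeasurableSet {p : X × X | F p.1 p.2}) (hfin : ∀ x, {y | F x y}.Finite)
    {g : Z → X} (hg : Measurable g) {S : Set (Z × X)} (hS : MeasurableSet S) :
    MeasurableSet {z | ∃ y, F (g z) y ∧ (z, y) ∈ S} := by
  have hmeas : MeasurableSet ({p : Z × X | F (g p.1) p.2} ∩ S) :=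
    ((hg.comp measurable_fst).prodMk measurable_snd hFborel).inter hS
  convert hmeas.fst_image_of_finite_sections hlt fun z => (hfin (g z)).subset fun y hy => hy.1
  ext z
  simp

theorem measurableSet_isLeast_rel_and_mem (hlt : MeasurableSet {p : X × X | p.1 < p.2})
    (hFborel : MeasurableSet {p : X × X | F p.1 p.2}) (hfin : ∀ x, {y | F x y}.Finite)
    {g : Z → X} (hg : Measurable g) {S : Set (Z × X)} (hS : MeasurableSet S) :
    MeasurableSet {p : Z × X | IsLeast {y | F (g p.1) y ∧ (p.1, y) ∈ S} p.2} := by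
  have hbelow := measurableSet_exists_rel_and_mem hlt hFborel hfin (hg.comp measurable_fst)
    (S := {q : (Z × X) × X | (q.1.1, q.2) ∈ S ∧ q.2 < q.1.2})
    ((measurable_fst.fst.prodMk measurable_snd hS).inter
      (measurable_snd.prodMk measurable_fst.snd hlt))
  have hmem : MeasurableSet {p : Z × X | F (g p.1) p.2 ∧ p ∈ S} :=
    ((hg.comp measurable_fst).prodMk measurable_snd hFborel).inter hS
  convert hmem.diff hbelow using 1
  ext p
  simp [IsLeast, lowerBounds, not_lt]

theorem measurableSet_isLeast_setOf_rel (hlt : MeasurableSet {p : X × X | p.1 < p.2})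
    (hFborel : MeasurableSet {p : X × X | F p.1 p.2}) (hfin : ∀ x, {y | F x y}.Finite) :
    MeasurableSet {x | IsLeast {y | F x y} x} := by
  simpa using measurable_id.prodMk measurable_id
    (measurableSet_isLeast_rel_and_mem hlt hFborel hfin measurable_id MeasurableSet.univ)

theorem measurable_classSucc (hF : Equivalence F) (hlt : MeasurableSet {p : X × X | p.1 < p.2})
    (hFborel : MeasurableSet {p : X × X | F p.1 p.2}) (hfin : ∀ x, {y | F x y}.Finite) :
    Measurable (classSucc F) := by
  refine measurable_of_measurableSet_graph ?_
  have hup := measurableSet_exists_rel_and_mem hlt hFborel hfin measurable_id hlt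
  have hnext := measurableSet_isLeast_rel_and_mem hlt hFborel hfin measurable_id hlt
  have hmin := measurableSet_isLeast_rel_and_mem hlt hFborel hfin measurable_id MeasurableSet.univ
  convert hnext.union ((measurable_fst hup).compl.inter hmin) using 1
  ext p
  simp [classSucc_eq_iff hF hfin]

end BorelClasses

/-- Every finite Borel equivalence relation on a standard Borel space admits a
Borel transversal and is induced by a Borel automorphism (Luzin–Novikov). -/
theorem finite_borel_equiv_transversal_and_automorphism
    {X : Type*} [MeasurableSpace X] [StandardBorelSpace X]
    (F : X → X → Prop) (hequiv : Equivalence F)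
    (hFborel : MeasurableSet {p : X × X | F p.1 p.2})
    (hfin : ∀ x : X, {y | F x y}.Finite) :
    (∃ B : Set X, MeasurableSet B ∧ ∀ x : X, ∃! y, y ∈ B ∧ F x y) ∧
    (∃ T : X ≃ X, Measurable (⇑T) ∧ Measurable (⇑T.symm) ∧
      ∀ x y : X, F x y ↔ ∃ n : ℕ, (⇑T)^[n] x = y) := by
  have he := MeasureTheory.measurableEmbedding_embeddingReal X
  let : LinearOrder X := LinearOrder.lift' _ he.injective
  have hlt : MeasurableSet {p : X × X | p.1 < p.2} :=
    (he.measurable.prodMap he.measurable) (measurableSet_lt measurable_fst measurable_snd)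
  have hT := measurable_classSucc hequiv hlt hFborel hfin
  let T : X ≃ X := Equiv.ofBijective _ (bijective_classSucc hequiv hfin)
  exact ⟨⟨_, measurableSet_isLeast_setOf_rel hlt hFborel hfin,
      existsUnique_isLeast_rel hequiv hfin⟩,
    ⟨T, hT, T.measurable_symm hT, fun _ _ => rel_iff_exists_iterate_classSucc hequiv hfin⟩⟩
end

section
/- Let $T$ be an aperiodic Borel automorphism of a standard Borel space $X$, $L \in \mathbb{N}$, $\ell : X \to \{1,\dots,L\}$ Borel with $I_x := \{T^i x : 0 \le i < \ell(x)\}$, and $S \subseteq X$ Borel meeting every orbit in a bi-infinite set with $S \cap T^{-i}S = \emptyset$ for $1 \le i \le L$. Let $\tilde{S} := \bigcup_{i=1}^{L} T^{-i}S$ and for $x \in X$ let $s(x)$ be the closest element of $S$ weakly to the left of $x$. Define $x \mathrel{F} y$ iff there exists $z \notin \tilde{S}$ with $x, y \in I_z$ and $[s(z), z)_T$ tiled by intervals of the form $I_w$. Then $F$ is an equivalence relation on its domain, every $F$-class equals $I_z$ for some $z$, and the domain of $F$ contains every point $x \notin \tilde{S}$ such that $[s(x), x)_T$ is tiled. -/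
/-- The orbit segment `[u, w)_T`. -/
def orbSeg {X : Type*} (T : X ≃ X) (u w : X) : Set X :=
  {a | (∃ m : ℕ, (⇑T)^[m] u = a) ∧ ∃ m : ℕ, 0 < m ∧ (⇑T)^[m] a = w}

/-- The tile `I_x = {x, Tx, …, T^(ℓ x - 1) x}`. -/
def orbTile {X : Type*} (T : X ≃ X) (ℓ : X → ℕ) (x : X) : Set X :=
  {w | ∃ i < ℓ x, (⇑T)^[i] x = w}

/-- `[u, w)_T` is tiled by intervals of the form `I_x`. -/
def IsTiled {X : Type*} (T : X ≃ X) (ℓ : X → ℕ) (u w : X) : Prop :=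
  ∃ P : Set X, P ⊆ orbSeg T u w ∧ P.PairwiseDisjoint (orbTile T ℓ) ∧
    (⋃ x ∈ P, orbTile T ℓ x) = orbSeg T u w

/- ### Auxiliary lemmas -/

lemma iter_inj_aux {X : Type*} {T : X ≃ X}
    (haper : ∀ x : X, ∀ n : ℕ, 0 < n → (⇑T)^[n] x ≠ x)
    {u : X} {m n : ℕ} (hle : m ≤ n) (h : (⇑T)^[m] u = (⇑T)^[n] u) : m = n := by
  by_contra hne
  have hpos : 0 < n - m := by omega
  have heq : n - m + m = n := by omega
  have : (⇑T)^[n - m] ((⇑T)^[n] u) = (⇑T)^[n] u := by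
    conv_lhs => rw [← h, ← Function.iterate_add_apply, heq]
  exact haper _ _ hpos this

/-- On an aperiodic orbit, the forward iterates are distinct. -/
lemma iter_inj {X : Type*} {T : X ≃ X}
    (haper : ∀ x : X, ∀ n : ℕ, 0 < n → (⇑T)^[n] x ≠ x)
    {u : X} {m n : ℕ} (h : (⇑T)^[m] u = (⇑T)^[n] u) : m = n := by
  rcases le_total m n with hle | hle
  · exact iter_inj_aux haper hle h
  · exact (iter_inj_aux haper hle h.symm).symm

/-- A partition of `[M, N)` by intervals `[a, a + f a)` forces the greedy
sequence from `M` to reach `N`. -/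
lemma nat_tiling (f : ℕ → ℕ) (hf : ∀ n, 1 ≤ f n) :
    ∀ d M N, M + d = N → ∀ A : Set ℕ, A ⊆ Set.Ico M N →
      A.PairwiseDisjoint (fun a => Set.Ico a (a + f a)) →
      (⋃ a ∈ A, Set.Ico a (a + f a)) = Set.Ico M N →
      ∃ j, (fun m => m + f m)^[j] M = N := by
  intro d
  induction d using Nat.strong_induction_on with
  | _ d ih =>
    intro M N hMN A hsub hdisj hcov
    rcases Nat.eq_zero_or_pos d with rfl | hd
    · exact ⟨0, by simpa using hMN⟩
    · have hM : M ∈ ⋃ a ∈ A, Set.Ico a (a + f a) := by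
        rw [hcov]; exact ⟨le_refl M, by omega⟩
      rw [Set.mem_iUnion₂] at hM
      obtain ⟨a, haA, haM⟩ := hM
      have haMa : a = M := le_antisymm haM.1 (hsub haA).1
      subst haMa
      -- so `a = M ∈ A`; rename for clarity
      have hfM : f a ≤ d := by
        have hmem : a + f a - 1 ∈ Set.Ico a (a + f a) := by
          have := hf a
          exact Set.mem_Ico.mpr ⟨by omega, by omega⟩
        have hx : a + f a - 1 ∈ Set.Ico a N := by
          rw [← hcov]
          exact Set.mem_biUnion haA hmem
        have := hx.2; omega
      have hsub' : A \ {a} ⊆ Set.Ico (a + f a) N := by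
        rintro b ⟨hbA, hbne⟩
        have hb := hsub hbA
        refine ⟨?_, hb.2⟩
        by_contra hlt
        push_neg at hlt
        have hdisj' := hdisj haA hbA (fun h => hbne (by simpa using h.symm))
        rw [Function.onFun] at hdisj'
        have hmb : b ∈ Set.Ico b (b + f b) := Set.mem_Ico.mpr ⟨le_refl b, by have := hf b; omega⟩
        have hma : b ∈ Set.Ico a (a + f a) := Set.mem_Ico.mpr ⟨hb.1, hlt⟩
        exact Set.disjoint_left.mp hdisj' hma hmb
      have hcov' : (⋃ b ∈ A \ {a}, Set.Ico b (b + f b)) = Set.Ico (a + f a) N := by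
        ext x
        constructor
        · intro hx
          rw [Set.mem_iUnion₂] at hx
          obtain ⟨b, hbA, hxb⟩ := hx
          have h1 : x ∈ Set.Ico a N := by
            rw [← hcov]; exact Set.mem_biUnion hbA.1 hxb
          exact ⟨le_trans (hsub' hbA).1 hxb.1, h1.2⟩
        · intro hx
          have h1 : x ∈ ⋃ b ∈ A, Set.Ico b (b + f b) := by
            rw [hcov]
            have h3 := hx.1
            have h4 := hf a
            exact Set.mem_Ico.mpr ⟨by omega, hx.2⟩
          rw [Set.mem_iUnion₂] at h1
          obtain ⟨b, hbA, hxb⟩ := h1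
          rw [Set.mem_iUnion₂]
          refine ⟨b, ⟨hbA, ?_⟩, hxb⟩
          intro hba
          rw [Set.mem_singleton_iff] at hba
          subst hba
          have h2 := hxb.2
          have h3 := hx.1
          omega
      obtain ⟨j, hj⟩ := ih (d - f a) (by have := hf a; omega) (a + f a) N (by omega)
        (A \ {a}) hsub' (hdisj.subset Set.diff_subset) hcov'
      refine ⟨j + 1, ?_⟩
      rw [Function.iterate_succ_apply]
      exact hj

lemma greedy_le_iterate (f : ℕ → ℕ) : ∀ j m, m ≤ (fun m => m + f m)^[j] m := by
  intro j
  induction j with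
  | zero => simp
  | succ j ih =>
    intro m
    rw [Function.iterate_succ_apply]
    exact le_trans (Nat.le_add_right m (f m)) (ih (m + f m))

/-- Two greedy-reachable points from `0` are separated by a full tile. -/
lemma greedy_gap (f : ℕ → ℕ) {N₁ N₂ : ℕ}
    (h1 : ∃ j, (fun m => m + f m)^[j] 0 = N₁)
    (h2 : ∃ j, (fun m => m + f m)^[j] 0 = N₂)
    (hlt : N₁ < N₂) : N₁ + f N₁ ≤ N₂ := by
  obtain ⟨j₁, hj₁⟩ := h1
  obtain ⟨j₂, hj₂⟩ := h2
  have hjlt : j₁ < j₂ := by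
    by_contra hle
    push_neg at hle
    have hN : N₂ ≤ N₁ := by
      rw [← hj₁, ← hj₂]
      have h : j₁ = (j₁ - j₂) + j₂ := by omega
      rw [h, Function.iterate_add_apply]
      exact greedy_le_iterate f _ _
    omega
  have key : N₂ = (fun m => m + f m)^[j₂ - j₁ - 1] ((fun m => m + f m)^[1 + j₁] 0) := by
    rw [← Function.iterate_add_apply, ← hj₂]
    congr 1
    omega
  have h1' : (fun m => m + f m)^[1 + j₁] 0 = N₁ + f N₁ := by
    rw [Function.iterate_add_apply, hj₁]
    simp
  rw [key, h1']
  exact greedy_le_iterate f _ _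

lemma orbSeg_iter {X : Type*} {T : X ≃ X}
    (haper : ∀ x : X, ∀ n : ℕ, 0 < n → (⇑T)^[n] x ≠ x) (u : X) (N : ℕ) :
    orbSeg T u ((⇑T)^[N] u) = (fun n => (⇑T)^[n] u) '' Set.Ico 0 N := by
  ext a
  constructor
  · rintro ⟨⟨m, rfl⟩, q, hq, hq2⟩
    rw [← Function.iterate_add_apply] at hq2
    have h := iter_inj haper hq2
    exact ⟨m, ⟨Nat.zero_le m, by omega⟩, rfl⟩
  · rintro ⟨n, ⟨-, hn⟩, rfl⟩
    refine ⟨⟨n, rfl⟩, N - n, by omega, ?_⟩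
    rw [← Function.iterate_add_apply]
    have h : N - n + n = N := by omega
    rw [h]

lemma orbTile_iter {X : Type*} (T : X ≃ X) (ℓ : X → ℕ) (u : X) (m : ℕ) :
    orbTile T ℓ ((⇑T)^[m] u)
      = (fun n => (⇑T)^[n] u) '' Set.Ico m (m + ℓ ((⇑T)^[m] u)) := by
  ext a
  constructor
  · rintro ⟨i, hi, rfl⟩
    refine ⟨i + m, Set.mem_Ico.mpr ⟨by omega, by omega⟩, ?_⟩
    show (⇑T)^[i + m] u = (⇑T)^[i] ((⇑T)^[m] u)
    exact Function.iterate_add_apply (⇑T) i m u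
  · rintro ⟨n, ⟨hn1, hn2⟩, rfl⟩
    refine ⟨n - m, by omega, ?_⟩
    rw [← Function.iterate_add_apply]
    have h : n - m + m = n := by omega
    rw [h]

/-- A tiled segment `[u, T^N u)` forces greedy reachability of `N`. -/
lemma isTiled_reach {X : Type*} {T : X ≃ X}
    (haper : ∀ x : X, ∀ n : ℕ, 0 < n → (⇑T)^[n] x ≠ x)
    (ℓ : X → ℕ) (hℓ1 : ∀ x, 1 ≤ ℓ x) (u : X) (N : ℕ)
    (h : IsTiled T ℓ u ((⇑T)^[N] u)) :
    ∃ j, (fun m => m + ℓ ((⇑T)^[m] u))^[j] 0 = N := by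
  obtain ⟨P, hPsub, hPdisj, hPcov⟩ := h
  set φ : ℕ → X := fun n => (⇑T)^[n] u with hφ
  have hφinj : Function.Injective φ := fun a b hab => iter_inj haper hab
  set A : Set ℕ := {n | n < N ∧ φ n ∈ P} with hA
  have hPA : φ '' A = P := by
    ext p
    constructor
    · rintro ⟨n, hn, rfl⟩; exact hn.2
    · intro hp
      have h1 := hPsub hp
      rw [orbSeg_iter haper] at h1
      obtain ⟨n, ⟨-, hn⟩, rfl⟩ := h1
      exact ⟨n, ⟨hn, hp⟩, rfl⟩
  have hAsub : A ⊆ Set.Ico 0 N := fun a ha => ⟨Nat.zero_le _, ha.1⟩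
  have hAdisj : A.PairwiseDisjoint (fun a => Set.Ico a (a + ℓ (φ a))) := by
    intro a ha b hb hab
    rw [Function.onFun]
    have hd := hPdisj (hPA ▸ Set.mem_image_of_mem φ ha) (hPA ▸ Set.mem_image_of_mem φ hb)
        (fun h => hab (hφinj h))
    rw [Function.onFun] at hd
    rw [Set.disjoint_left]
    intro x hxa hxb
    have h1 : φ x ∈ orbTile T ℓ (φ a) := by
      rw [orbTile_iter]; exact Set.mem_image_of_mem φ hxa
    have h2 : φ x ∈ orbTile T ℓ (φ b) := by
      rw [orbTile_iter]; exact Set.mem_image_of_mem φ hxb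
    exact Set.disjoint_left.mp hd h1 h2
  have hAcov : (⋃ a ∈ A, Set.Ico a (a + ℓ (φ a))) = Set.Ico 0 N := by
    rw [← Set.image_eq_image hφinj, Set.image_iUnion₂]
    have h1 : (⋃ a ∈ A, φ '' Set.Ico a (a + ℓ (φ a))) = ⋃ a ∈ A, orbTile T ℓ (φ a) := by
      apply Set.iUnion₂_congr
      intro a _
      exact (orbTile_iter T ℓ u a).symm
    rw [h1, ← Set.biUnion_image, hPA, hPcov, orbSeg_iter haper]
  exact nat_tiling (fun m => ℓ (φ m)) (fun n => hℓ1 (φ n))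
    N 0 N (by omega) A hAsub hAdisj hAcov

/-- Uniqueness of the marker point weakly to the left. -/
lemma s_unique {X : Type*} {T : X ≃ X}
    (haper : ∀ x : X, ∀ n : ℕ, 0 < n → (⇑T)^[n] x ≠ x) {S : Set X} {z u₁ u₂ : X}
    (h1S : u₁ ∈ S) (h2S : u₂ ∈ S)
    (h1 : ∃ n, (⇑T)^[n] u₁ = z) (h2 : ∃ n, (⇑T)^[n] u₂ = z)
    (h1no : ∀ w, (∃ n, 0 < n ∧ (⇑T)^[n] u₁ = w) → (∃ n, (⇑T)^[n] w = z) → w ∉ S)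
    (h2no : ∀ w, (∃ n, 0 < n ∧ (⇑T)^[n] u₂ = w) → (∃ n, (⇑T)^[n] w = z) → w ∉ S) :
    u₁ = u₂ := by
  obtain ⟨n₁, hn₁⟩ := h1
  obtain ⟨n₂, hn₂⟩ := h2
  rcases lt_trichotomy n₁ n₂ with h | h | h
  · have key : (⇑T)^[n₂ - n₁] u₂ = u₁ := by
      apply T.injective.iterate n₁
      rw [← Function.iterate_add_apply]
      have hh : n₁ + (n₂ - n₁) = n₂ := by omega
      rw [hh, hn₂, hn₁]
    exact absurd h1S (h2no u₁ ⟨n₂ - n₁, by omega, key⟩ ⟨n₁, hn₁⟩)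
  · subst h
    exact T.injective.iterate n₁ (by rw [hn₁, hn₂])
  · have key : (⇑T)^[n₁ - n₂] u₁ = u₂ := by
      apply T.injective.iterate n₂
      rw [← Function.iterate_add_apply]
      have hh : n₂ + (n₁ - n₂) = n₁ := by omega
      rw [hh, hn₁, hn₂]
    exact absurd h2S (h1no u₂ ⟨n₁ - n₂, by omega, key⟩ ⟨n₂, hn₂⟩)

/-- Key uniqueness: if two tiles (in the asymmetric order `j ≤ i`) of valid
witnesses overlap, then the witnesses coincide. -/
lemma witness_eq_of_le {X : Type*} {T : X ≃ X}
    (haper : ∀ x : X, ∀ n : ℕ, 0 < n → (⇑T)^[n] x ≠ x)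
    {L : ℕ} {ℓ : X → ℕ} (hℓ : ∀ x, 1 ≤ ℓ x ∧ ℓ x ≤ L)
    {S : Set X} {s : X → X}
    (hs : ∀ x : X, s x ∈ S ∧ (∃ n : ℕ, (⇑T)^[n] (s x) = x) ∧
      ∀ w : X, (∃ n : ℕ, 0 < n ∧ (⇑T)^[n] (s x) = w) → (∃ n : ℕ, (⇑T)^[n] w = x) →
        w ∉ S)
    {z₁ z₂ y : X}
    (h1 : ∀ i, 1 ≤ i → i ≤ L → (⇑T)^[i] z₁ ∉ S)
    {i j : ℕ} (hi : i < ℓ z₁) (hj : j < ℓ z₂)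
    (hyi : (⇑T)^[i] z₁ = y) (hyj : (⇑T)^[j] z₂ = y)
    (hji : j ≤ i)
    (ht1 : IsTiled T ℓ (s z₁) z₁) (ht2 : IsTiled T ℓ (s z₂) z₂) :
    z₁ = z₂ := by
  set k := i - j with hk
  have hz₂ : (⇑T)^[k] z₁ = z₂ := by
    apply T.injective.iterate j
    rw [← Function.iterate_add_apply]
    have hh : j + k = i := by omega
    rw [hh, hyi, hyj]
  rcases Nat.eq_zero_or_pos k with hk0 | hkpos
  · rw [hk0] at hz₂; simpa using hz₂
  exfalso
  obtain ⟨n₁, hn₁⟩ := (hs z₁).2.1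
  have hkL : k ≤ L := by have := (hℓ z₁).2; omega
  have hss : s z₁ = s z₂ := by
    apply s_unique (T := T) haper (hs z₁).1 (hs z₂).1
        ⟨k + n₁, ?_⟩ (hs z₂).2.1 ?_ (hs z₂).2.2
    · rw [Function.iterate_add_apply, hn₁, hz₂]
    · rintro w ⟨p, hp, hpw⟩ ⟨q, hq⟩
      have hqp : q + p = k + n₁ := by
        apply iter_inj haper (u := s z₁)
        rw [Function.iterate_add_apply, hpw, hq, Function.iterate_add_apply, hn₁, hz₂]
      rcases le_or_gt p n₁ with hple | hplt
      · refine (hs z₁).2.2 w ⟨p, hp, hpw⟩ ⟨n₁ - p, ?_⟩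
        rw [← hpw, ← Function.iterate_add_apply]
        have hh : n₁ - p + p = n₁ := by omega
        rw [hh, hn₁]
      · have hw : (⇑T)^[p - n₁] z₁ = w := by
          rw [← hn₁, ← Function.iterate_add_apply]
          have hh : p - n₁ + n₁ = p := by omega
          rw [hh, hpw]
        intro hwS
        exact h1 (p - n₁) (by omega) (by omega) (by rw [hw]; exact hwS)
  have hz₂' : (⇑T)^[k + n₁] (s z₁) = z₂ := by
    rw [Function.iterate_add_apply, hn₁, hz₂]
  have r₁ := isTiled_reach haper ℓ (fun x => (hℓ x).1) (s z₁) n₁ (by rw [hn₁]; exact ht1)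
  have r₂ := isTiled_reach haper ℓ (fun x => (hℓ x).1) (s z₁) (k + n₁)
    (by rw [hz₂', hss]; exact ht2)
  have hgap := greedy_gap (fun m => ℓ ((⇑T)^[m] (s z₁))) r₁ r₂ (by omega)
  simp only [hn₁] at hgap
  omega

/-- The relation `F` from the proof of the pointwise ergodic theorem is a
partial equivalence relation whose classes are tiles `I_z`, and whose domain
contains every `x ∉ S̃` with `[s(x), x)_T` tiled. -/
theorem tiling_equivalence_relation
    {X : Type*} [MeasurableSpace X] [StandardBorelSpace X]
    (T : X ≃ X) (hT : Measurable (⇑T)) (hT' : Measurable (⇑T.symm))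
    (haper : ∀ x : X, ∀ n : ℕ, 0 < n → (⇑T)^[n] x ≠ x)
    (L : ℕ) (ℓ : X → ℕ) (hℓmeas : Measurable ℓ)
    (hℓ : ∀ x, 1 ≤ ℓ x ∧ ℓ x ≤ L)
    (S : Set X) (hS : MeasurableSet S)
    (hbiinf : ∀ x : X, ∀ m : ℕ,
      (∃ n : ℕ, m ≤ n ∧ (⇑T)^[n] x ∈ S) ∧ (∃ n : ℕ, m ≤ n ∧ (⇑T.symm)^[n] x ∈ S))
    (hsep : ∀ i : ℕ, 1 ≤ i → i ≤ L → Disjoint S ((⇑T)^[i] ⁻¹' S))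
    (s : X → X)
    (hs : ∀ x : X, s x ∈ S ∧ (∃ n : ℕ, (⇑T)^[n] (s x) = x) ∧
      ∀ w : X, (∃ n : ℕ, 0 < n ∧ (⇑T)^[n] (s x) = w) → (∃ n : ℕ, (⇑T)^[n] w = x) →
        w ∉ S)
    (tS : Set X) (htS : tS = ⋃ i ∈ Finset.Icc 1 L, (⇑T)^[i] ⁻¹' S)
    (F : X → X → Prop)
    (hF : ∀ x y : X, F x y ↔ ∃ z : X, z ∉ tS ∧ x ∈ orbTile T ℓ z ∧
      y ∈ orbTile T ℓ z ∧ IsTiled T ℓ (s z) z) :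
    (∀ x y : X, F x y → F y x) ∧
    (∀ x y z : X, F x y → F y z → F x z) ∧
    (∀ x : X, (∃ y, F x y) → F x x) ∧
    (∀ x : X, (∃ y, F x y) → ∃ z : X, {y | F x y} = orbTile T ℓ z) ∧
    (∀ x : X, x ∉ tS → IsTiled T ℓ (s x) x → ∃ y, F x y) := by
  have h1' : ∀ z : X, z ∉ tS → ∀ i, 1 ≤ i → i ≤ L → (⇑T)^[i] z ∉ S := by
    intro z hz i h1i hiL hzS
    apply hz
    rw [htS]
    exact Set.mem_iUnion₂.mpr ⟨i, Finset.mem_Icc.mpr ⟨h1i, hiL⟩, hzS⟩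
  have huniq : ∀ z₁ z₂ y : X, z₁ ∉ tS → z₂ ∉ tS →
      y ∈ orbTile T ℓ z₁ → y ∈ orbTile T ℓ z₂ →
      IsTiled T ℓ (s z₁) z₁ → IsTiled T ℓ (s z₂) z₂ → z₁ = z₂ := by
    intro z₁ z₂ y hz₁ hz₂ hy₁ hy₂ ht₁ ht₂
    obtain ⟨i, hi, hyi⟩ := hy₁
    obtain ⟨j, hj, hyj⟩ := hy₂
    rcases le_total j i with hji | hij
    · exact witness_eq_of_le haper hℓ hs (h1' z₁ hz₁) hi hj hyi hyj hji ht₁ ht₂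
    · exact (witness_eq_of_le haper hℓ hs (h1' z₂ hz₂) hj hi hyj hyi hij ht₂ ht₁).symm
  refine ⟨?_, ?_, ?_, ?_, ?_⟩
  · intro x y h
    rw [hF] at h ⊢
    obtain ⟨z, h1, h2, h3, h4⟩ := h
    exact ⟨z, h1, h3, h2, h4⟩
  · intro x y w hxy hyw
    rw [hF] at hxy hyw ⊢
    obtain ⟨z, hz1, hz2, hz3, hz4⟩ := hxy
    obtain ⟨z', hz1', hz2', hz3', hz4'⟩ := hyw
    have heq := huniq z z' y hz1 hz1' hz3 hz2' hz4 hz4'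
    subst heq
    exact ⟨z, hz1, hz2, hz3', hz4⟩
  · intro x hx
    obtain ⟨y, hxy⟩ := hx
    rw [hF] at hxy ⊢
    obtain ⟨z, h1, h2, h3, h4⟩ := hxy
    exact ⟨z, h1, h2, h2, h4⟩
  · intro x hx
    obtain ⟨y, hxy⟩ := hx
    rw [hF] at hxy
    obtain ⟨z, h1, h2, h3, h4⟩ := hxy
    refine ⟨z, ?_⟩
    ext y'
    simp only [Set.mem_setOf_eq]
    rw [hF]
    constructor
    · rintro ⟨z', h1', h2', h3', h4'⟩
      have heq := huniq z z' x h1 h1' h2 h2' h4 h4'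
      subst heq
      exact h3'
    · intro hy'
      exact ⟨z, h1, h2, hy', h4⟩
  · intro x hx ht
    refine ⟨x, ?_⟩
    rw [hF]
    exact ⟨x, hx, ⟨0, (hℓ x).1, rfl⟩, ⟨0, (hℓ x).1, rfl⟩, ht⟩
end
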